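/- Under the relations d·a₀ = e·c₀, c_k = 0, and d·a_i = b·c_{i-1} + e·c_i for i = 1,…,k (with b, d ≠ 0, k ≥ 2), every solution (α₁, α₂) ∈ ℝ² of the system Σ_{i=0}^{k} a_i α₁^i α₂^{k-i} + b α₁ + e α₂ = 0 and Σ_{i=0}^{k} c_i α₁^i α₂^{k-i} + d α₂ = 0 satisfies either Σ_{i=0}^{k-1} c_i α₁^i α₂^{k-1-i} + d = 0, or (b α₁ + e α₂ = 0 and α₂ = 0). -/

import Mathlib

/-!
Both equations factor through `U := Σ_{i<k} cᵢ α₁^i α₂^(k-1-i)`. Since `c_k = 0`, the second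
equation reads `α₂ (U + d) = 0`; the recursion for the `aᵢ` turns `d · (first) - e · (second)`
into `b α₁ (U + d) = 0`. So either `U + d = 0`, or `α₁ = α₂ = 0`.
-/

open Finset

section BinaryForm

variable {R : Type*} [CommRing R]

theorem sum_range_succ_mul_pow_eq (c : ℕ → R) (k : ℕ) (x y : R) :
    ∑ i ∈ range (k + 1), c i * x ^ i * y ^ (k - i)
      = y * ∑ i ∈ range k, c i * x ^ i * y ^ (k - 1 - i) + c k * x ^ k := by
  rw [sum_range_succ, Nat.sub_self, pow_zero, mul_one, mul_sum]
  congr 1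
  refine sum_congr rfl fun i hi => ?_
  rw [show k - i = k - 1 - i + 1 by have := mem_range.mp hi; omega, pow_succ]
  ring

theorem mul_sum_range_succ_of_recursion (a c : ℕ → R) (b d e : R) (k : ℕ)
    (h0 : d * a 0 = e * c 0) (hrec : ∀ i < k, d * a (i + 1) = b * c i + e * c (i + 1))
    (x y : R) :
    d * ∑ i ∈ range (k + 1), a i * x ^ i * y ^ (k - i)
      = e * ∑ i ∈ range (k + 1), c i * x ^ i * y ^ (k - i)
        + b * x * ∑ i ∈ range k, c i * x ^ i * y ^ (k - 1 - i) := by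
  simp only [sum_range_succ', mul_add, mul_sum]
  have hterm : ∀ i ∈ range k, d * (a (i + 1) * x ^ (i + 1) * y ^ (k - (i + 1)))
      = e * (c (i + 1) * x ^ (i + 1) * y ^ (k - (i + 1)))
        + b * x * (c i * x ^ i * y ^ (k - 1 - i)) := fun i hi => by
    rw [show k - (i + 1) = k - 1 - i by omega]
    linear_combination x ^ (i + 1) * y ^ (k - 1 - i) * hrec i (mem_range.mp hi)
  rw [sum_congr rfl hterm, sum_add_distrib]
  linear_combination x ^ 0 * y ^ (k - 0) * h0

end BinaryForm

theorem stmt_3_general (k : ℕ) (a c : ℕ → ℝ) (b d e : ℝ)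
    (hb : b ≠ 0)
    (h0 : d * a 0 = e * c 0) (hck : c k = 0)
    (hi : ∀ i, 1 ≤ i → i ≤ k → d * a i = b * c (i - 1) + e * c i)
    (α₁ α₂ : ℝ)
    (h1 : (∑ i ∈ Finset.range (k + 1), a i * α₁ ^ i * α₂ ^ (k - i))
            + b * α₁ + e * α₂ = 0)
    (h2 : (∑ i ∈ Finset.range (k + 1), c i * α₁ ^ i * α₂ ^ (k - i))
            + d * α₂ = 0) :
    ((∑ i ∈ Finset.range k, c i * α₁ ^ i * α₂ ^ (k - 1 - i)) + d = 0)
      ∨ (b * α₁ + e * α₂ = 0 ∧ α₂ = 0) := by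
  set U := ∑ i ∈ range k, c i * α₁ ^ i * α₂ ^ (k - 1 - i)
  have hrec : ∀ i < k, d * a (i + 1) = b * c i + e * c (i + 1) := fun i hik => by
    simpa using hi (i + 1) (by omega) (by omega)
  have hα₂ : α₂ * (U + d) = 0 := by
    linear_combination h2 - sum_range_succ_mul_pow_eq c k α₁ α₂ - α₁ ^ k * hck
  have hα₁ : b * α₁ * (U + d) = 0 := by
    linear_combination
      d * h1 - e * h2 - mul_sum_range_succ_of_recursion a c b d e k h0 hrec α₁ α₂
  by_cases hU : U + d = 0
  · exact Or.inl hU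
  · have hα₂0 : α₂ = 0 := (mul_eq_zero.mp hα₂).resolve_right hU
    have hα₁0 : α₁ = 0 :=
      (mul_eq_zero.mp ((mul_eq_zero.mp hα₁).resolve_right hU)).resolve_left hb
    exact Or.inr ⟨by simp [hα₁0, hα₂0], hα₂0⟩

/-- Every solution of the reduced system lies on the curve
`Σ cᵢ α₁^i α₂^(k-1-i) + d = 0` or satisfies `b α₁ + e α₂ = 0 ∧ α₂ = 0`. -/
theorem stmt_3 (k : ℕ) (hk : 2 ≤ k) (a c : ℕ → ℝ) (b d e : ℝ)
    (hb : b ≠ 0) (hd : d ≠ 0)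
    (h0 : d * a 0 = e * c 0) (hck : c k = 0)
    (hi : ∀ i, 1 ≤ i → i ≤ k → d * a i = b * c (i - 1) + e * c i)
    (α₁ α₂ : ℝ)
    (h1 : (∑ i ∈ Finset.range (k + 1), a i * α₁ ^ i * α₂ ^ (k - i))
            + b * α₁ + e * α₂ = 0)
    (h2 : (∑ i ∈ Finset.range (k + 1), c i * α₁ ^ i * α₂ ^ (k - i))
            + d * α₂ = 0) :
    ((∑ i ∈ Finset.range k, c i * α₁ ^ i * α₂ ^ (k - 1 - i)) + d = 0)
      ∨ (b * α₁ + e * α₂ = 0 ∧ α₂ = 0) :=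
  stmt_3_general k a c b d e hb h0 hck hi α₁ α₂ h1 h2
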